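/- If the nonstationary ideal on ω₁ is saturated, then for every uncountable cardinal κ and every stationary set S ⊆ [κ]^ω there exists a stationary A ⊆ ω₁ such that (i) S is projective stationary above A, and (ii) the set {x ∈ S : δ_x ∉ A} is nonstationary. -/

import Mathlib

open Set Cardinal

noncomputable section

/-- The first uncountable ordinal `ω₁`. -/
def omega1 : Ordinal.{0} := (Cardinal.aleph 1).ord

/-- `x ∩ ω₁` is a countable ordinal. -/
def GoodSet (x : Set Ordinal.{0}) : Prop :=
  ∃ δ < omega1, x ∩ Set.Iio omega1 = Set.Iio δ

/-- `δ_x`: the countable ordinal `x ∩ ω₁`. -/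
def delta (x : Set Ordinal.{0}) : Ordinal.{0} :=
  sInf {δ : Ordinal.{0} | x ∩ Set.Iio omega1 = Set.Iio δ}

/-- The space `[X]^ω` of countable subsets of `X` (restricted, as in the paper,
to those `x` whose intersection with `ω₁` is a countable ordinal). -/
def countPow (X : Set Ordinal.{0}) : Set (Set Ordinal.{0}) :=
  {x | x ⊆ X ∧ x.Countable ∧ GoodSet x}

/-- `C` is club in `[X]^ω`: it is cofinal and closed under unions of countable
`⊆`-increasing chains. -/
def IsClubIn (X : Set Ordinal.{0}) (C : Set (Set Ordinal.{0})) : Prop :=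
  C ⊆ countPow X ∧ (∀ x ∈ countPow X, ∃ y ∈ C, x ⊆ y) ∧
    ∀ D : Set (Set Ordinal.{0}), D ⊆ C → D.Countable → D.Nonempty →
      IsChain (· ⊆ ·) D → ⋃₀ D ∈ C

/-- `S` is stationary in `[X]^ω`: it meets every club. -/
def IsStatIn (X : Set Ordinal.{0}) (S : Set (Set Ordinal.{0})) : Prop :=
  ∀ C, IsClubIn X C → (S ∩ C).Nonempty

/-- Club subsets of `ω₁` (closed unbounded in the ordinal `ω₁`). -/
def IsClubOmega1 (C : Set Ordinal.{0}) : Prop :=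
  C ⊆ Set.Iio omega1 ∧ (∀ α < omega1, ∃ β ∈ C, α < β) ∧
    ∀ α < omega1, α ≠ 0 → (∀ β < α, ∃ γ ∈ C, β < γ ∧ γ < α) → α ∈ C

/-- Stationary subsets of `ω₁`. -/
def IsStatOmega1 (A : Set Ordinal.{0}) : Prop :=
  ∀ C, IsClubOmega1 C → (A ∩ C).Nonempty

/-- A (continuous, `δ`-increasing) `ω₁`-chain: `⟨f α : α < ω₁⟩`. -/
def IsOmega1Chain (f : Ordinal.{0} → Set Ordinal.{0}) : Prop :=
  (∀ α β, α < β → β < omega1 → f α ⊆ f β) ∧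
  (∀ β < omega1, Order.IsSuccLimit β → f β = ⋃ α ∈ Set.Iio β, f α) ∧
  (∀ α β, α < β → β < omega1 → delta (f α) < delta (f β))

/-- The space `[Y]^{ω₁}` of subsets of `Y` of cardinality `ℵ₁`. -/
def aleph1Pow (Y : Set Ordinal.{0}) : Set (Set Ordinal.{0}) :=
  {X | X ⊆ Y ∧ Cardinal.mk X = Cardinal.aleph 1}

/-- `C` is club in `[Y]^{ω₁}`: cofinal and closed under unions of
`⊆`-increasing chains of length `ω₁`. -/
def IsClubAleph1 (Y : Set Ordinal.{0}) (C : Set (Set Ordinal.{0})) : Prop :=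
  C ⊆ aleph1Pow Y ∧ (∀ X ∈ aleph1Pow Y, ∃ Z ∈ C, X ⊆ Z) ∧
    ∀ f : Ordinal.{0} → Set Ordinal.{0}, (∀ α β, α < β → β < omega1 → f α ⊆ f β) →
      (∀ α < omega1, f α ∈ C) → (⋃ α ∈ Set.Iio omega1, f α) ∈ C

/-- `S` is a local club in `[Y]^ω`: the set of `X ∈ [Y]^{ω₁}` such that
`S ∩ [X]^ω` contains a club in `[X]^ω` contains a club in `[Y]^{ω₁}`. -/
def IsLocalClub (Y : Set Ordinal.{0}) (S : Set (Set Ordinal.{0})) : Prop :=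
  ∃ C, IsClubAleph1 Y C ∧ ∀ X ∈ C, ∃ D, IsClubIn X D ∧ D ⊆ S

/-- `S` is projective stationary in `[X]^ω`. -/
def ProjStationary (X : Set Ordinal.{0}) (S : Set (Set Ordinal.{0})) : Prop :=
  ∀ A ⊆ Set.Iio omega1, IsStatOmega1 A → IsStatIn X {x ∈ S | delta x ∈ A}

/-- `S ⊆ [κ]^ω` is spanning. -/
def IsSpanning (κ : Cardinal) (S : Set (Set Ordinal.{0})) : Prop :=
  ∀ lam : Cardinal, κ ≤ lam → ∀ C, IsClubIn (Set.Iio lam.ord) C →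
    ∃ D, IsClubIn (Set.Iio lam.ord) D ∧
      ∀ x ∈ D, ∃ y ∈ C, x ⊆ y ∧ delta x = delta y ∧ (y ∩ Set.Iio κ.ord) ∈ S

/-- `S ⊆ [X]^ω` is reflective: for every club `C`, `S ∩ C` contains an `ω₁`-chain. -/
def IsReflective (X : Set Ordinal.{0}) (S : Set (Set Ordinal.{0})) : Prop :=
  ∀ C, IsClubIn X C → ∃ f, IsOmega1Chain f ∧ ∀ α < omega1, f α ∈ S ∩ C

/-- `S ⊆ [X]^ω` is full. -/
def IsFull (X : Set Ordinal.{0}) (S : Set (Set Ordinal.{0})) : Prop :=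
  ∀ A ⊆ Set.Iio omega1, IsStatOmega1 A →
    ∃ B, B ⊆ A ∧ IsStatOmega1 B ∧ ∃ C, IsClubIn X C ∧ {x ∈ C | delta x ∈ B} ⊆ S

/-- The order type of a set of ordinals. -/
def otp (s : Set Ordinal.{0}) : Ordinal.{0} :=
  sInf {o : Ordinal.{0} | Nonempty (↥s ≃o ↥(Set.Iio o))}

/-- The nonstationary ideal on `ω₁` is saturated. -/
def NSSaturated : Prop :=
  ∀ W : Set (Set Ordinal.{0}), (∀ A ∈ W, A ⊆ Set.Iio omega1 ∧ IsStatOmega1 A) →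
    (∀ A ∈ W, ∀ B ∈ W, A ≠ B → ¬ IsStatOmega1 (A ∩ B)) →
    Cardinal.mk W ≤ Cardinal.aleph 1

-- batch 1: delta basics
lemma omega1_isLimit : Order.IsSuccLimit omega1 := Cardinal.isSuccLimit_ord (Cardinal.aleph0_le_aleph 1)

lemma delta_eq {x : Set Ordinal.{0}} {δ : Ordinal.{0}}
    (h : x ∩ Set.Iio omega1 = Set.Iio δ) : delta x = δ := by
  have : {δ' : Ordinal.{0} | x ∩ Set.Iio omega1 = Set.Iio δ'} = {δ} := by
    ext δ'; simp only [Set.mem_setOf_eq, Set.mem_singleton_iff]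
    constructor
    · intro h'; exact Set.Iio_inj.mp (h'.symm.trans h)
    · rintro rfl; exact h
  rw [delta, this, csInf_singleton]

lemma good_delta {x : Set Ordinal.{0}} (hx : GoodSet x) :
    x ∩ Set.Iio omega1 = Set.Iio (delta x) ∧ delta x < omega1 := by
  obtain ⟨δ, hδ, heq⟩ := hx
  rw [delta_eq heq]; exact ⟨heq, hδ⟩

lemma delta_lt_omega1 {x : Set Ordinal.{0}} (hx : GoodSet x) : delta x < omega1 :=
  (good_delta hx).2

lemma lt_delta_iff {x : Set Ordinal.{0}} (hx : GoodSet x) {i : Ordinal.{0}} :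
    i < delta x ↔ (i ∈ x ∧ i < omega1) := by
  have h := (good_delta hx).1
  constructor
  · intro hi
    have : i ∈ x ∩ Set.Iio omega1 := by rw [h]; exact hi
    exact ⟨this.1, this.2⟩
  · intro ⟨h1, h2⟩
    have : i ∈ x ∩ Set.Iio omega1 := ⟨h1, h2⟩
    rwa [h] at this

lemma delta_mono {x y : Set Ordinal.{0}} (hx : GoodSet x) (hy : GoodSet y)
    (hxy : x ⊆ y) : delta x ≤ delta y := by
  by_contra h
  push_neg at h
  have h1 : delta y ∈ x ∧ delta y < omega1 := (lt_delta_iff hx).1 h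
  have h2 : delta y < delta y := (lt_delta_iff hy).2 ⟨hxy h1.1, h1.2⟩
  exact lt_irrefl _ h2

-- batch 2: unions of good sets, countPow is club
lemma range_good {f : ℕ → Set Ordinal.{0}} (hg : ∀ n, GoodSet (f n)) :
    GoodSet (⋃ n, f n) := by
  have hlt : ∀ n, delta (f n) < omega1 := fun n => delta_lt_omega1 (hg n)
  have hσlt : (⨆ n, delta (f n)) < omega1 := by
    refine Ordinal.iSup_lt_ord ?_ hlt
    rw [omega1, Cardinal.isRegular_aleph_one.cof_eq, Cardinal.mk_nat]
    exact Cardinal.aleph0_lt_aleph_one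
  have hbdd : BddAbove (Set.range fun n => delta (f n)) := ⟨omega1, by
    rintro _ ⟨n, rfl⟩; exact (hlt n).le⟩
  refine ⟨⨆ n, delta (f n), hσlt, ?_⟩
  ext β
  constructor
  · rintro ⟨hβx, hβ⟩
    obtain ⟨_, ⟨n, rfl⟩, hn⟩ := hβx
    have : β ∈ f n ∩ Set.Iio omega1 := ⟨hn, hβ⟩
    rw [(good_delta (hg n)).1] at this
    exact lt_of_lt_of_le this (le_ciSup hbdd n)
  · intro hβ
    have : ∃ n, β < delta (f n) := by
      by_contra h
      push_neg at h
      exact absurd (ciSup_le h) (not_le.2 hβ)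
    obtain ⟨n, hn⟩ := this
    have : β ∈ f n ∩ Set.Iio omega1 := by
      rw [(good_delta (hg n)).1]; exact hn
    exact ⟨Set.mem_iUnion.2 ⟨n, this.1⟩, this.2⟩

lemma sUnion_good {D : Set (Set Ordinal.{0})} (hD : D.Countable) (hne : D.Nonempty)
    (hg : ∀ x ∈ D, GoodSet x) : GoodSet (⋃₀ D) := by
  obtain ⟨f, rfl⟩ := hD.exists_eq_range hne
  rw [Set.sUnion_range]
  exact range_good fun n => hg _ ⟨n, rfl⟩

lemma sUnion_countPow {X : Set Ordinal.{0}} {D : Set (Set Ordinal.{0})}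
    (hD : D ⊆ countPow X) (hc : D.Countable) (hne : D.Nonempty) :
    ⋃₀ D ∈ countPow X := by
  refine ⟨?_, ?_, sUnion_good hc hne (fun x hx => (hD hx).2.2)⟩
  · exact Set.sUnion_subset fun x hx => (hD hx).1
  · exact Set.Countable.sUnion hc (fun x hx => (hD hx).2.1)

lemma countPow_isClub (X : Set Ordinal.{0}) : IsClubIn X (countPow X) :=
  ⟨le_refl _, fun x hx => ⟨x, hx, subset_rfl⟩,
    fun D hD hc hne _ => sUnion_countPow hD hc hne⟩

-- batch 3: countable intersections of clubs
open Classical in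
lemma exists_mem_all_clubs {X : Set Ordinal.{0}} {C : ℕ → Set (Set Ordinal.{0})}
    (hC : ∀ n, IsClubIn X (C n)) {x : Set Ordinal.{0}} (hx : x ∈ countPow X) :
    ∃ y, x ⊆ y ∧ ∀ n, y ∈ C n := by
  set e : ℕ → ℕ := fun n => (Nat.unpair n).1 with he
  have step : ∀ i (s : Set Ordinal.{0}), s ∈ countPow X → ∃ y, y ∈ C i ∧ s ⊆ y := by
    intro i s hs
    obtain ⟨y, hy, hsy⟩ := (hC i).2.1 s hs
    exact ⟨y, hy, hsy⟩
  let g : ℕ → {s : Set Ordinal.{0} // s ∈ countPow X} := fun n =>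
    Nat.rec ⟨x, hx⟩ (fun n p =>
      ⟨choose (step (e n) p.1 p.2), (hC (e n)).1 (choose_spec (step (e n) p.1 p.2)).1⟩) n
  set z : ℕ → Set Ordinal.{0} := fun n => (g n).1 with hzdef
  have hz0 : z 0 = x := rfl
  have hzC : ∀ n, z (n + 1) ∈ C (e n) := fun n => (choose_spec (step (e n) (g n).1 (g n).2)).1
  have hstep : ∀ n, z n ⊆ z (n + 1) := fun n => (choose_spec (step (e n) (g n).1 (g n).2)).2
  have hmono : ∀ m n, m ≤ n → z m ⊆ z n := by
    intro m n hmn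
    induction n with
    | zero => rw [Nat.le_zero.1 hmn]
    | succ k ih =>
      rcases Nat.eq_or_lt_of_le hmn with h | h
      · rw [h]
      · exact (ih (Nat.lt_succ_iff.1 h)).trans (hstep k)
  refine ⟨⋃ n, z n, by rw [← hz0]; exact Set.subset_iUnion z 0, ?_⟩
  intro i
  set D : Set (Set Ordinal.{0}) := (fun n => z (n + 1)) '' {n | e n = i} with hD
  have hDC : D ⊆ C i := by rintro _ ⟨n, hn, rfl⟩; rw [← hn]; exact hzC n
  have hDc : D.Countable := (Set.to_countable _).image _
  have hDne : D.Nonempty := ⟨z (Nat.pair i 0 + 1), ⟨Nat.pair i 0, by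
    simp [he, Nat.unpair_pair], rfl⟩⟩
  have hDch : IsChain (· ⊆ ·) D := by
    rintro _ ⟨n, _, rfl⟩ _ ⟨m, _, rfl⟩ _
    rcases le_total n m with h | h
    · exact Or.inl (hmono _ _ (Nat.succ_le_succ h))
    · exact Or.inr (hmono _ _ (Nat.succ_le_succ h))
  have huD : ⋃₀ D = ⋃ n, z n := by
    apply Set.Subset.antisymm
    · rintro β ⟨_, ⟨n, _, rfl⟩, hβ⟩
      exact Set.mem_iUnion.2 ⟨n + 1, hβ⟩
    · rintro β hβ
      obtain ⟨m, hm⟩ := Set.mem_iUnion.1 hβ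
      refine ⟨z (Nat.pair i m + 1), ⟨Nat.pair i m, by simp [he, Nat.unpair_pair], rfl⟩, ?_⟩
      exact hmono m (Nat.pair i m + 1) ((Nat.right_le_pair i m).trans (Nat.le_succ _)) hm
  rw [← huD]
  exact (hC i).2.2 D hDC hDc hDne hDch

lemma iInter_isClub {X : Set Ordinal.{0}} {C : ℕ → Set (Set Ordinal.{0})}
    (hC : ∀ n, IsClubIn X (C n)) : IsClubIn X (⋂ n, C n) := by
  refine ⟨fun y hy => (hC 0).1 (Set.mem_iInter.1 hy 0), ?_, ?_⟩
  · intro x hx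
    obtain ⟨y, hxy, hy⟩ := exists_mem_all_clubs hC hx
    exact ⟨y, Set.mem_iInter.2 hy, hxy⟩
  · intro D hD hc hne hch
    exact Set.mem_iInter.2 fun n =>
      (hC n).2.2 D (fun s hs => Set.mem_iInter.1 (hD hs) n) hc hne hch

lemma binary_inter_isClub {X : Set Ordinal.{0}} {C₁ C₂ : Set (Set Ordinal.{0})}
    (h1 : IsClubIn X C₁) (h2 : IsClubIn X C₂) : IsClubIn X (C₁ ∩ C₂) := by
  have := iInter_isClub (C := fun n => if n = 0 then C₁ else C₂)
    (fun n => by split <;> assumption)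
  have heq : (⋂ n, if n = 0 then C₁ else C₂) = C₁ ∩ C₂ := by
    apply Set.Subset.antisymm
    · intro y hy
      exact ⟨by simpa using Set.mem_iInter.1 hy 0, by simpa using Set.mem_iInter.1 hy 1⟩
    · rintro y ⟨h₁, h₂⟩
      exact Set.mem_iInter.2 fun n => by split <;> assumption
  rwa [heq] at this

-- batch 4: countable Iio, diagonal intersection
lemma countable_Iio_of_lt_omega1 {γ : Ordinal.{0}} (h : γ < omega1) :
    (Set.Iio γ).Countable := by
  rw [← Cardinal.le_aleph0_iff_set_countable, Ordinal.mk_Iio_ordinal,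
    Cardinal.lift_le_aleph0]
  have : γ.card < Cardinal.aleph 1 := Cardinal.lt_ord.1 h
  rwa [← Cardinal.succ_aleph0, Order.lt_succ_iff] at this

open Classical in
lemma exists_mem_indexed_clubs {X : Set Ordinal.{0}} {I : Set Ordinal.{0}}
    (hI : I.Countable) {C : Ordinal.{0} → Set (Set Ordinal.{0})}
    (hC : ∀ i ∈ I, IsClubIn X (C i)) {x : Set Ordinal.{0}} (hx : x ∈ countPow X) :
    ∃ y, x ⊆ y ∧ y ∈ countPow X ∧ ∀ i ∈ I, y ∈ C i := by
  rcases I.eq_empty_or_nonempty with rfl | hne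
  · exact ⟨x, subset_rfl, hx, fun i hi => absurd hi (Set.notMem_empty i)⟩
  obtain ⟨f, hf⟩ := hI.exists_eq_range hne
  have hC' : ∀ n, IsClubIn X (C (f n)) := fun n => hC (f n) (hf ▸ ⟨n, rfl⟩)
  obtain ⟨y, hxy, hy⟩ := exists_mem_all_clubs hC' hx
  refine ⟨y, hxy, (hC' 0).1 (hy 0), ?_⟩
  intro i hi
  rw [hf] at hi
  obtain ⟨n, rfl⟩ := hi
  exact hy n

/-- The diagonal intersection of `ω₁`-many clubs. -/
def diagInter (X : Set Ordinal.{0}) (C : Ordinal.{0} → Set (Set Ordinal.{0})) :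
    Set (Set Ordinal.{0}) :=
  {x ∈ countPow X | ∀ i < delta x, x ∈ C i}

open Classical in
lemma diagInter_isClub {X : Set Ordinal.{0}} {C : Ordinal.{0} → Set (Set Ordinal.{0})}
    (hC : ∀ i, IsClubIn X (C i)) : IsClubIn X (diagInter X C) := by
  refine ⟨fun y hy => hy.1, ?_, ?_⟩
  · -- cofinality
    intro x hx
    have step : ∀ s : Set Ordinal.{0}, s ∈ countPow X →
        ∃ y, s ⊆ y ∧ y ∈ countPow X ∧ ∀ i < delta s, y ∈ C i := by
      intro s hs
      have := exists_mem_indexed_clubs (I := Set.Iio (delta s))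
        (countable_Iio_of_lt_omega1 (delta_lt_omega1 hs.2.2))
        (fun i _ => hC i) hs
      obtain ⟨y, h1, h2, h3⟩ := this
      exact ⟨y, h1, h2, fun i hi => h3 i hi⟩
    let g : ℕ → {s : Set Ordinal.{0} // s ∈ countPow X} := fun n =>
      Nat.rec ⟨x, hx⟩ (fun _ p => ⟨choose (step p.1 p.2), (choose_spec (step p.1 p.2)).2.1⟩) n
    set z : ℕ → Set Ordinal.{0} := fun n => (g n).1 with hzdef
    have hz0 : z 0 = x := rfl
    have hzP : ∀ n, z n ∈ countPow X := fun n => (g n).2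
    have hstep : ∀ n, z n ⊆ z (n + 1) := fun n => (choose_spec (step (g n).1 (g n).2)).1
    have hzC : ∀ n, ∀ i < delta (z n), z (n + 1) ∈ C i :=
      fun n => (choose_spec (step (g n).1 (g n).2)).2.2
    have hmono : ∀ m n, m ≤ n → z m ⊆ z n := by
      intro m n hmn
      induction n with
      | zero => rw [Nat.le_zero.1 hmn]
      | succ k ih =>
        rcases Nat.eq_or_lt_of_le hmn with h | h
        · rw [h]
        · exact (ih (Nat.lt_succ_iff.1 h)).trans (hstep k)
    set y : Set Ordinal.{0} := ⋃ n, z n with hydef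
    have hyU : y = ⋃₀ Set.range z := by rw [Set.sUnion_range]
    have hrange : Set.range z ⊆ countPow X := by rintro _ ⟨n, rfl⟩; exact hzP n
    have hych : IsChain (· ⊆ ·) (Set.range z) := by
      rintro _ ⟨n, rfl⟩ _ ⟨m, rfl⟩ _
      rcases le_total n m with h | h
      · exact Or.inl (hmono _ _ h)
      · exact Or.inr (hmono _ _ h)
    have hyP : y ∈ countPow X := by
      rw [hyU]
      exact sUnion_countPow hrange (Set.countable_range z) ⟨x, 0, rfl⟩
    refine ⟨y, ⟨hyP, ?_⟩, by rw [← hz0]; exact Set.subset_iUnion z 0⟩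
    intro i hi
    -- i < delta y, so i ∈ z n for some n
    obtain ⟨hiy, hiω⟩ := (lt_delta_iff hyP.2.2).1 hi
    obtain ⟨n, hn⟩ := Set.mem_iUnion.1 hiy
    have hilt : i < delta (z n) := (lt_delta_iff (hzP n).2.2).2 ⟨hn, hiω⟩
    -- tail is inside C i
    have htail : ∀ m, n ≤ m → z (m + 1) ∈ C i := by
      intro m hm
      exact hzC m i (lt_of_lt_of_le hilt (delta_mono (hzP n).2.2 (hzP m).2.2 (hmono n m hm)))
    set D : Set (Set Ordinal.{0}) := (fun m => z (m + 1)) '' {m | n ≤ m} with hD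
    have huD : ⋃₀ D = y := by
      apply Set.Subset.antisymm
      · rintro β ⟨_, ⟨m, _, rfl⟩, hβ⟩
        exact Set.mem_iUnion.2 ⟨m + 1, hβ⟩
      · rintro β hβ
        obtain ⟨m, hm⟩ := Set.mem_iUnion.1 hβ
        refine ⟨z (max m n + 1), ⟨max m n, le_max_right m n, rfl⟩, ?_⟩
        exact hmono m (max m n + 1) ((le_max_left m n).trans (Nat.le_succ _)) hm
    rw [← huD]
    refine (hC i).2.2 D ?_ ((Set.to_countable _).image _) ⟨z (n + 1), n, le_refl n, rfl⟩ ?_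
    · rintro _ ⟨m, hm, rfl⟩; exact htail m hm
    · rintro _ ⟨m₁, _, rfl⟩ _ ⟨m₂, _, rfl⟩ _
      rcases le_total m₁ m₂ with h | h
      · exact Or.inl (hmono _ _ (Nat.succ_le_succ h))
      · exact Or.inr (hmono _ _ (Nat.succ_le_succ h))
  · -- chain closure
    intro D hD hc hne hch
    have hDcp : D ⊆ countPow X := fun s hs => (hD hs).1
    have hyP : ⋃₀ D ∈ countPow X := sUnion_countPow hDcp hc hne
    refine ⟨hyP, ?_⟩
    intro i hi
    obtain ⟨hiy, hiω⟩ := (lt_delta_iff hyP.2.2).1 hi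
    obtain ⟨s, hsD, his⟩ := hiy
    have hilt : i < delta s := (lt_delta_iff (hDcp hsD).2.2).2 ⟨his, hiω⟩
    set D' : Set (Set Ordinal.{0}) := {t ∈ D | s ⊆ t} with hD'
    have hD'C : D' ⊆ C i := by
      rintro t ⟨htD, hst⟩
      exact (hD htD).2 i (lt_of_lt_of_le hilt (delta_mono (hDcp hsD).2.2 (hDcp htD).2.2 hst))
    have huD' : ⋃₀ D' = ⋃₀ D := by
      apply Set.Subset.antisymm
      · exact Set.sUnion_subset_sUnion fun t ht => ht.1
      · rintro β ⟨t, htD, hβt⟩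
        rcases eq_or_ne t s with rfl | hts
        · exact ⟨t, ⟨htD, subset_rfl⟩, hβt⟩
        · rcases hch htD hsD hts with h | h
          · exact ⟨s, ⟨hsD, subset_rfl⟩, h hβt⟩
          · exact ⟨t, ⟨htD, h⟩, hβt⟩
    rw [← huD']
    refine (hC i).2.2 D' (fun t ht => hD'C ht) (hc.mono (fun t ht => ht.1))
      ⟨s, hsD, subset_rfl⟩ (fun a ha b hb hab => hch ha.1 hb.1 hab)

-- batch 5: omega1 clubs
lemma Iio_omega1_club : IsClubOmega1 (Set.Iio omega1) := by
  refine ⟨subset_rfl, ?_, ?_⟩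
  · intro α hα
    exact ⟨Order.succ α, omega1_isLimit.succ_lt hα, Order.lt_succ α⟩
  · intro α hα _ _; exact hα

lemma clubAbove_club {i : Ordinal.{0}} (hi : i < omega1) :
    IsClubOmega1 {α | i < α ∧ α < omega1} := by
  refine ⟨fun α hα => hα.2, ?_, ?_⟩
  · intro α hα
    refine ⟨Order.succ (max α i), ⟨?_, ?_⟩, ?_⟩
    · exact lt_of_le_of_lt (le_max_right α i) (Order.lt_succ _)
    · exact omega1_isLimit.succ_lt (max_lt hα hi)
    · exact lt_of_le_of_lt (le_max_left α i) (Order.lt_succ _)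
  · intro α hα hα0 h
    obtain ⟨γ, ⟨hiγ, _⟩, _, hγα⟩ := h 0 (pos_iff_ne_zero.2 hα0)
    exact ⟨hiγ.trans hγα, hα⟩

lemma bounded_not_stat {A : Set Ordinal.{0}} {i : Ordinal.{0}} (hi : i < omega1)
    (hA : ∀ α ∈ A, α ≤ i) : ¬ IsStatOmega1 A := by
  intro h
  obtain ⟨α, hαA, hiα, _⟩ := h _ (clubAbove_club hi)
  exact absurd (hA α hαA) (not_le.2 hiα)

lemma not_stat_iff {A : Set Ordinal.{0}} :
    ¬ IsStatOmega1 A ↔ ∃ C, IsClubOmega1 C ∧ A ∩ C = ∅ := by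
  rw [IsStatOmega1]
  push_neg
  simp only [Set.not_nonempty_iff_eq_empty]

lemma not_statIn_iff {X : Set Ordinal.{0}} {S : Set (Set Ordinal.{0})} :
    ¬ IsStatIn X S ↔ ∃ C, IsClubIn X C ∧ S ∩ C = ∅ := by
  rw [IsStatIn]
  push_neg
  simp only [Set.not_nonempty_iff_eq_empty]

lemma deltaClub_isClub {X : Set Ordinal.{0}} (hX : Set.Iio omega1 ⊆ X)
    {C : Set Ordinal.{0}} (hC : IsClubOmega1 C) :
    IsClubIn X {x ∈ countPow X | delta x ∈ C} := by
  refine ⟨fun y hy => hy.1, ?_, ?_⟩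
  · intro x hx
    obtain ⟨γ, hγC, hγ⟩ := hC.2.1 (delta x) (delta_lt_omega1 hx.2.2)
    have hγω : γ < omega1 := hC.1 hγC
    refine ⟨x ∪ Set.Iio γ, ⟨⟨?_, ?_, ?_⟩, ?_⟩, Set.subset_union_left⟩
    · exact Set.union_subset hx.1 (fun β hβ => hX (lt_trans hβ hγω))
    · exact hx.2.1.union (countable_Iio_of_lt_omega1 hγω)
    · refine ⟨γ, hγω, ?_⟩
      rw [Set.union_inter_distrib_right, (good_delta hx.2.2).1, Set.Iio_inter_Iio,
        min_eq_left hγω.le, Set.union_eq_self_of_subset_left (Set.Iio_subset_Iio hγ.le)]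
    · have heq : (x ∪ Set.Iio γ) ∩ Set.Iio omega1 = Set.Iio γ := by
        rw [Set.union_inter_distrib_right, (good_delta hx.2.2).1, Set.Iio_inter_Iio,
          min_eq_left hγω.le, Set.union_eq_self_of_subset_left (Set.Iio_subset_Iio hγ.le)]
      rw [delta_eq heq]
      exact hγC
  · intro D hD hc hne hch
    have hDcp : D ⊆ countPow X := fun s hs => (hD hs).1
    have hyP : ⋃₀ D ∈ countPow X := sUnion_countPow hDcp hc hne
    refine ⟨hyP, ?_⟩
    by_cases hex : ∃ s ∈ D, delta s = delta (⋃₀ D)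
    · obtain ⟨s, hsD, hs⟩ := hex
      rw [← hs]
      exact (hD hsD).2
    · push_neg at hex
      have hlt : ∀ s ∈ D, delta s < delta (⋃₀ D) := fun s hs =>
        lt_of_le_of_ne (delta_mono (hDcp hs).2.2 hyP.2.2
          (Set.subset_sUnion_of_mem hs)) (hex s hs)
      obtain ⟨s₀, hs₀⟩ := hne
      refine hC.2.2 (delta (⋃₀ D)) (delta_lt_omega1 hyP.2.2) ?_ ?_
      · intro h0
        rw [h0] at hlt
        exact absurd (hlt s₀ hs₀) (by simp)
      · intro β hβ
        obtain ⟨hβy, hβω⟩ := (lt_delta_iff hyP.2.2).1 hβ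
        obtain ⟨s, hsD, hβs⟩ := hβy
        exact ⟨delta s, (hD hsD).2, (lt_delta_iff (hDcp hsD).2.2).2 ⟨hβs, hβω⟩, hlt s hsD⟩

open Classical

/-- if the nonstationary ideal on `ω₁` is saturated, then every stationary
`S ⊆ [κ]^ω` is projective stationary above some stationary `A ⊆ ω₁` with
`{x ∈ S : δ_x ∉ A}` nonstationary. -/
theorem saturated_implies_projStat_above_and_nonstat_off (hsat : NSSaturated)
    (κ : Cardinal) (hκ : Cardinal.aleph0 < κ)
    (S : Set (Set Ordinal.{0})) (hS : S ⊆ countPow (Set.Iio κ.ord))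
    (hstat : IsStatIn (Set.Iio κ.ord) S) :
    ∃ A, A ⊆ Set.Iio omega1 ∧ IsStatOmega1 A ∧
      (∀ B, B ⊆ A → IsStatOmega1 B →
        IsStatIn (Set.Iio κ.ord) {x ∈ S | delta x ∈ B}) ∧
      ¬ IsStatIn (Set.Iio κ.ord) {x ∈ S | delta x ∉ A} := by
  set X := Set.Iio κ.ord with hXdef
  have hω₁κ : omega1 ≤ κ.ord := by
    rw [omega1]
    apply Cardinal.ord_le_ord.2
    rw [← Cardinal.succ_aleph0]
    exact Order.succ_le_of_lt hκ
  have hX : Set.Iio omega1 ⊆ X := fun β hβ => lt_of_lt_of_le hβ hω₁κ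
  -- maximal almost disjoint family of "bad" stationary sets
  set Fam : Set (Set (Set Ordinal.{0})) :=
    {W | (∀ A ∈ W, A ⊆ Set.Iio omega1 ∧ IsStatOmega1 A ∧
            ¬ IsStatIn X {x ∈ S | delta x ∈ A}) ∧
         (∀ A ∈ W, ∀ B ∈ W, A ≠ B → ¬ IsStatOmega1 (A ∩ B))} with hFam
  obtain ⟨m, hm1, hm2⟩ : ∃ m, Maximal (· ∈ Fam) m := by
    apply zorn_subset
    intro c hc hchain
    refine ⟨⋃₀ c, ⟨?_, ?_⟩, fun s hs => Set.subset_sUnion_of_mem hs⟩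
    · rintro A ⟨W, hWc, hAW⟩
      exact (hc hWc).1 A hAW
    · rintro A ⟨W₁, hW₁, hAW⟩ B ⟨W₂, hW₂, hBW⟩ hne
      rcases eq_or_ne W₁ W₂ with rfl | hWne
      · exact (hc hW₁).2 A hAW B hBW hne
      · rcases hchain hW₁ hW₂ hWne with hsub | hsub
        · exact (hc hW₂).2 A (hsub hAW) B hBW hne
        · exact (hc hW₁).2 A hAW B (hsub hBW) hne
  -- saturation gives |m| ≤ ℵ₁
  have hcard : Cardinal.mk m ≤ Cardinal.aleph 1 :=
    hsat m (fun A hA => ⟨(hm1.1 A hA).1, (hm1.1 A hA).2.1⟩) hm1.2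
  -- enumeration of m by countable ordinals
  have hcard2 : Cardinal.mk m ≤ Cardinal.mk (Set.Iio omega1) := by
    rw [omega1, Ordinal.mk_Iio_ordinal, Cardinal.card_ord, Cardinal.lift_aleph,
      Ordinal.lift_one]
    exact hcard
  obtain ⟨j⟩ : Nonempty (↥m ↪ ↥(Set.Iio omega1)) := Cardinal.le_def _ _ |>.1 hcard2
  set B : Ordinal.{0} → Set Ordinal.{0} := fun i =>
    if h : ∃ w : ↥m, ((j w : ↥(Set.Iio omega1)) : Ordinal.{0}) = i
    then ((choose h : ↥m) : Set Ordinal.{0}) else ∅ with hBdef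
  have hBmem : ∀ i, B i = ∅ ∨ B i ∈ m := by
    intro i
    by_cases h : ∃ w : ↥m, ((j w : ↥(Set.Iio omega1)) : Ordinal.{0}) = i
    · right; rw [hBdef]; simp only [dif_pos h]; exact (choose h).2
    · left; rw [hBdef]; simp only [dif_neg h]
  have hBenum : ∀ w ∈ m, ∃ i < omega1, B i = w := by
    intro w hw
    refine ⟨((j ⟨w, hw⟩ : ↥(Set.Iio omega1)) : Ordinal.{0}), (j ⟨w, hw⟩).2, ?_⟩
    have h : ∃ w' : ↥m, ((j w' : ↥(Set.Iio omega1)) : Ordinal.{0}) =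
        ((j ⟨w, hw⟩ : ↥(Set.Iio omega1)) : Ordinal.{0}) := ⟨⟨w, hw⟩, rfl⟩
    rw [hBdef]
    simp only [dif_pos h]
    have := choose_spec h
    have heq : choose h = ⟨w, hw⟩ := j.injective (Subtype.ext this)
    rw [heq]
  -- each bad set gives a disjoint club
  have Tnonstat : ∀ i, ∃ C, IsClubIn X C ∧ {x ∈ S | delta x ∈ B i} ∩ C = ∅ := by
    intro i
    rcases hBmem i with h | h
    · refine ⟨countPow X, countPow_isClub X, ?_⟩
      have : {x ∈ S | delta x ∈ B i} = ∅ := by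
        rw [h]; ext x; simp
      rw [this, Set.empty_inter]
    · exact not_statIn_iff.1 (hm1.1 _ h).2.2
  choose Cfun hCclub hCdisj using Tnonstat
  have hΔ : IsClubIn X (diagInter X Cfun) := diagInter_isClub hCclub
  -- the stationary set A
  refine ⟨{α | α < omega1 ∧ ∀ i < α, α ∉ B i}, fun α hα => hα.1, ?_, ?_, ?_⟩
  · -- A is stationary
    intro C hCc
    by_contra hne
    rw [Set.not_nonempty_iff_eq_empty] at hne
    have hE : IsClubIn X {x ∈ countPow X | delta x ∈ C} := deltaClub_isClub hX hCc
    obtain ⟨x, hxS, hxΔ, hxP, hxC⟩ := hstat _ (binary_inter_isClub hΔ hE)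
    have hδω : delta x < omega1 := delta_lt_omega1 (hS hxS).2.2
    have hδA : delta x ∉ {α | α < omega1 ∧ ∀ i < α, α ∉ B i} := by
      intro hmem
      have : delta x ∈ ({α | α < omega1 ∧ ∀ i < α, α ∉ B i} ∩ C) := ⟨hmem, hxC⟩
      rw [hne] at this
      exact this
    have : ∃ i < delta x, delta x ∈ B i := by
      by_contra hcon
      push_neg at hcon
      exact hδA ⟨hδω, fun i hi hBi => hcon i hi hBi⟩
    obtain ⟨i, hiδ, hiB⟩ := this
    have hxCi : x ∈ Cfun i := hxΔ.2 i hiδ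
    have : x ∈ {x ∈ S | delta x ∈ B i} ∩ Cfun i := ⟨⟨hxS, hiB⟩, hxCi⟩
    rw [hCdisj i] at this
    exact this
  · -- projective stationary above A
    intro B' hB'A hB'stat
    by_contra hns
    have hB'notin : B' ∉ m := by
      intro hmem
      obtain ⟨i, hiω, hiB⟩ := hBenum B' hmem
      have hbd : ∀ α ∈ B', α ≤ i := by
        intro α hα
        by_contra hlt
        push_neg at hlt
        exact (hB'A hα).2 i hlt (hiB ▸ hα)
      exact bounded_not_stat hiω hbd hB'stat
    have hins : insert B' m ∈ Fam := by
      constructor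
      · rintro A (rfl | hA)
        · exact ⟨fun α hα => (hB'A hα).1, hB'stat, hns⟩
        · exact hm1.1 A hA
      · have key : ∀ w ∈ m, ¬ IsStatOmega1 (B' ∩ w) := by
          intro w hw
          obtain ⟨i, hiω, hiB⟩ := hBenum w hw
          refine bounded_not_stat hiω ?_
          rintro α ⟨hαB', hαw⟩
          by_contra hlt
          push_neg at hlt
          exact (hB'A hαB').2 i hlt (hiB ▸ hαw)
        rintro A (rfl | hA) B'' (rfl | hB'') hne
        · exact absurd rfl hne
        · exact key B'' hB''
        · rw [Set.inter_comm]; exact key A hA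
        · exact hm1.2 A hA B'' hB'' hne
    have : insert B' m ⊆ m := hm2 hins (Set.subset_insert B' m)
    exact hB'notin (this (Set.mem_insert B' m))
  · -- off A is nonstationary
    refine not_statIn_iff.2 ⟨diagInter X Cfun, hΔ, ?_⟩
    ext x
    simp only [Set.mem_inter_iff, Set.mem_setOf_eq, Set.mem_empty_iff_false, iff_false]
    rintro ⟨⟨hxS, hxA⟩, hxΔ⟩
    have hδω : delta x < omega1 := delta_lt_omega1 (hS hxS).2.2
    have : ∃ i < delta x, delta x ∈ B i := by
      by_contra hcon
      push_neg at hcon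
      exact hxA ⟨hδω, fun i hi hBi => hcon i hi hBi⟩
    obtain ⟨i, hiδ, hiB⟩ := this
    have : x ∈ {x ∈ S | delta x ∈ B i} ∩ Cfun i := ⟨⟨hxS, hiB⟩, hxΔ.2 i hiδ⟩
    rw [hCdisj i] at this
    exact this
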